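/- Let z_1, ..., z_N : [0,∞) → C^d solve the full LHS model ż_j = κ_0(⟨z_j, z_j⟩ z_c − ⟨z_c, z_j⟩ z_j) + κ_1(⟨z_j, z_c⟩ − ⟨z_c, z_j⟩) z_j with ||z_j(t)|| = 1 for all t, and set ρ = ||z_c||. Then d(ρ²)/dt = (2κ_0/N) ∑_{i=1}^N (ρ² − |⟨z_i, z_c⟩|²) + (4(κ_0 + κ_1)/N) ∑_{i=1}^N (Im⟨z_i, z_c⟩)². In particular, if κ_0 ≥ 0 and κ_0 + κ_1 ≥ 0, then ρ is non-decreasing. -/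

import Mathlib

/-!
Since `‖z_c‖²` has derivative `2 Re ⟪z_c, ż_c⟫ = (2/N) ∑ⱼ Re ⟪z_c, ż_j⟫`, it suffices to evaluate one
summand. For a unit vector `z_j`, writing `a = ⟪z_j, z_c⟫`, the `κ₀`-part contributes
`κ₀ (ρ² - Re (a²)) = κ₀ (ρ² - |a|²) + 2 κ₀ (Im a)²`, and `a - conj a = 2 i Im a` turns the `κ₁`-part
into `2 κ₁ (Im a)²`. Cauchy–Schwarz makes the rate nonnegative when `κ₀, κ₀ + κ₁ ≥ 0`, and the
mean value theorem gives monotonicity of `ρ`.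
-/

open scoped InnerProductSpace ComplexConjugate

section LHSModel

variable {E : Type*} [NormedAddCommGroup E] [InnerProductSpace ℂ E]

/-- `lhsField κ₀ κ₁ z_c z_j` is the right-hand side of the LHS equation for `ż_j`. -/
noncomputable def lhsField (κ₀ κ₁ : ℝ) (w z : E) : E :=
  (κ₀ : ℂ) • (⟪z, z⟫_ℂ • w - ⟪w, z⟫_ℂ • z) + (κ₁ : ℂ) • ((⟪z, w⟫_ℂ - ⟪w, z⟫_ℂ) • z)

theorem re_inner_lhsField (κ₀ κ₁ : ℝ) {z : E} (hz : ‖z‖ = 1) (w : E) :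
    (⟪w, lhsField κ₀ κ₁ w z⟫_ℂ).re
      = κ₀ * (‖w‖ ^ 2 - ‖⟪z, w⟫_ℂ‖ ^ 2) + 2 * (κ₀ + κ₁) * (⟪z, w⟫_ℂ).im ^ 2 := by
  have hzz : ⟪z, z⟫_ℂ = 1 := by simp [inner_self_eq_norm_sq_to_K, hz]
  have hwz : ⟪w, z⟫_ℂ = conj ⟪z, w⟫_ℂ := (inner_conj_symm w z).symm
  simp only [lhsField, inner_add_right, inner_smul_right, inner_sub_right, hzz, hwz,
    inner_self_eq_norm_sq_to_K]
  generalize ⟪z, w⟫_ℂ = a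
  rw [Complex.sq_norm, Complex.normSq_apply]
  simp [Complex.mul_re, Complex.mul_im, ← Complex.ofReal_pow]
  ring

theorem sq_norm_inner_le_sq_norm {z : E} (hz : ‖z‖ = 1) (w : E) :
    ‖⟪z, w⟫_ℂ‖ ^ 2 ≤ ‖w‖ ^ 2 := by
  gcongr
  simpa [hz] using norm_inner_le_norm (𝕜 := ℂ) z w

theorem hasDerivAt_norm_sq_centroid {N : ℕ} (κ₀ κ₁ : ℝ) {z : Fin N → ℝ → E} {zc : ℝ → E}
    (hzc : ∀ s, zc s = (N : ℂ)⁻¹ • ∑ k, z k s) {t : ℝ} (hnorm : ∀ j, ‖z j t‖ = 1)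
    (hode : ∀ j, HasDerivAt (z j) (lhsField κ₀ κ₁ (zc t) (z j t)) t) :
    HasDerivAt (fun s => ‖zc s‖ ^ 2)
      ((2 * κ₀ / N) * ∑ i, (‖zc t‖ ^ 2 - ‖⟪z i t, zc t⟫_ℂ‖ ^ 2)
        + (4 * (κ₀ + κ₁) / N) * ∑ i, (⟪z i t, zc t⟫_ℂ).im ^ 2) t := by
  -- `HasDerivAt.norm_sq` is stated for the real inner product `Re ⟪·, ·⟫_ℂ`.
  let := InnerProductSpace.rclikeToReal ℂ E
  have hzc' : HasDerivAt zc ((N : ℂ)⁻¹ • ∑ j, lhsField κ₀ κ₁ (zc t) (z j t)) t := by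
    convert (HasDerivAt.fun_sum fun j _ => hode j).const_smul (N : ℂ)⁻¹ using 1
    ext1 s
    simp [hzc]
  convert hzc'.norm_sq using 1
  rw [real_inner_eq_re_inner ℂ, inner_smul_right, inner_sum, RCLike.re_to_complex,
    ← Complex.ofReal_natCast, ← Complex.ofReal_inv, Complex.re_ofReal_mul, Complex.re_sum]
  simp only [re_inner_lhsField κ₀ κ₁ (hnorm _), Finset.sum_add_distrib, ← Finset.mul_sum]
  ring

theorem monotoneOn_Ici_of_hasDerivAt_nonneg {f f' : ℝ → ℝ} {a : ℝ}
    (hf : ∀ x, a ≤ x → HasDerivAt f (f' x) x) (hf' : ∀ x, a ≤ x → 0 ≤ f' x) :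
    MonotoneOn f (Set.Ici a) := by
  refine monotoneOn_of_hasDerivWithinAt_nonneg (f' := f') (convex_Ici a)
    (fun x hx => (hf x hx).continuousAt.continuousWithinAt) (fun x hx => ?_) (fun x hx => ?_)
  all_goals rw [interior_Ici] at hx
  exacts [(hf x hx.le).hasDerivWithinAt, hf' x hx.le]

end LHSModel

theorem stmt17 (d N : ℕ) (κ₀ κ₁ : ℝ)
    (z : Fin N → ℝ → EuclideanSpace ℂ (Fin d))
    (zc : ℝ → EuclideanSpace ℂ (Fin d))
    (hzc : ∀ t : ℝ, zc t = (N : ℂ)⁻¹ • ∑ k, z k t)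
    (hnorm : ∀ (j : Fin N) (t : ℝ), 0 ≤ t → ‖z j t‖ = 1)
    (hode : ∀ (j : Fin N) (t : ℝ), 0 ≤ t → HasDerivAt (z j)
      ((κ₀ : ℂ) • ((inner ℂ (z j t) (z j t) : ℂ) • zc t
          - (inner ℂ (zc t) (z j t) : ℂ) • z j t)
        + (κ₁ : ℂ) • (((inner ℂ (z j t) (zc t) : ℂ)
          - (inner ℂ (zc t) (z j t) : ℂ)) • z j t)) t) :
    (∀ t : ℝ, 0 ≤ t →
      HasDerivAt (fun s => ‖zc s‖ ^ 2)
        ((2 * κ₀ / N) * ∑ i, (‖zc t‖ ^ 2 - ‖(inner ℂ (z i t) (zc t) : ℂ)‖ ^ 2)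
          + (4 * (κ₀ + κ₁) / N) * ∑ i, ((inner ℂ (z i t) (zc t) : ℂ)).im ^ 2) t) ∧
    (0 ≤ κ₀ → 0 ≤ κ₀ + κ₁ →
      ∀ s t : ℝ, 0 ≤ s → s ≤ t → ‖zc s‖ ≤ ‖zc t‖) := by
  have hderiv : ∀ t : ℝ, 0 ≤ t → HasDerivAt (fun s => ‖zc s‖ ^ 2)
      ((2 * κ₀ / N) * ∑ i, (‖zc t‖ ^ 2 - ‖⟪z i t, zc t⟫_ℂ‖ ^ 2)
        + (4 * (κ₀ + κ₁) / N) * ∑ i, (⟪z i t, zc t⟫_ℂ).im ^ 2) t := fun t ht =>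
    hasDerivAt_norm_sq_centroid κ₀ κ₁ hzc (fun j => hnorm j t ht) (fun j => hode j t ht)
  refine ⟨hderiv, fun hκ₀ hκ₀₁ s t hs hst => ?_⟩
  have hmono := monotoneOn_Ici_of_hasDerivAt_nonneg hderiv fun x hx => by
    have hcs : ∀ i, 0 ≤ ‖zc x‖ ^ 2 - ‖⟪z i x, zc x⟫_ℂ‖ ^ 2 := fun i =>
      sub_nonneg.2 (sq_norm_inner_le_sq_norm (hnorm i x hx) (zc x))
    have hsum := Finset.sum_nonneg fun i (_ : i ∈ Finset.univ) => hcs i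
    positivity
  exact (pow_le_pow_iff_left₀ (norm_nonneg _) (norm_nonneg _) two_ne_zero).1
    (hmono hs (hs.trans hst) hst)
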